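/- For every integer n ≥ 1, Σ_{T ∈ 𝒜_n} ∏_{v internal vertex of T} (2 + q(h_v − 1)) = (n!/2^n) · Σ_{T ∈ 𝒯_n} ∏_{v vertex of T} ((2 + q(h_v − 1))/h_v), where the first sum is over André trees on n vertices and the second over plane binary trees with n vertices; the identity holds for every rational q. -/

import Mathlib

open scoped Classical

noncomputable section

/-- An André tree on `n` vertices, encoded by its parent map `p` on `Fin n`
(vertex `i` stands for label `i+1`): every non-root vertex points to a strictly
larger parent, the root (label `n`) is a fixed point by convention, and each
vertex has at most two children. -/
def IsAndreTree (n : ℕ) (p : Fin n → Fin n) : Prop :=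
  (∀ i : Fin n, (i : ℕ) + 1 < n → (i : ℕ) < (p i : ℕ)) ∧
  (∀ i : Fin n, ¬ (i : ℕ) + 1 < n → p i = i) ∧
  ∀ j : Fin n, (Finset.univ.filter fun i : Fin n => (i : ℕ) + 1 < n ∧ p i = j).card ≤ 2

/-- The set of André trees on `n` vertices. -/
def andreTrees (n : ℕ) : Finset (Fin n → Fin n) :=
  Finset.univ.filter (IsAndreTree n)

/-- The hook length of the vertex `v`: the number of vertices in the subtree
rooted at `v`, i.e. the number of vertices `w` having `v` as an ancestor. -/
def hookA (n : ℕ) (p : Fin n → Fin n) (v : Fin n) : ℕ :=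
  (Finset.univ.filter fun w : Fin n => ∃ k < n, p^[k] w = v).card

/-- The set of internal vertices, i.e. vertices with hook length `> 1`. -/
def internalsA (n : ℕ) (p : Fin n → Fin n) : Finset (Fin n) :=
  Finset.univ.filter fun v => 1 < hookA n p v

end

/-- The product over all vertices `v` of a plane binary tree of `f h_v`, where
`h_v` is the hook length of `v` (the number of vertices of the subtree rooted
at `v`). -/
def hookProd (f : ℕ → ℚ) : Tree Unit → ℚ
  | BinaryTree.nil => 1
  | BinaryTree.node _ l r => f (l.numNodes + r.numNodes + 1) * hookProd f l * hookProd f r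

/-!
Deleting the root of an André tree on `m + 2` vertices leaves at most two André trees, on
complementary label sets, and changes no other hook length. Listing first the one that contains a
fixed label and relabelling both order-preservingly, the weighted count `A` of André trees satisfies
`2 A (m + 2) = φ (m + 2) * ∑ k, (m + 1).choose k * A k * A (m + 1 - k)`, the factor `2` because
either side may be listed first. Splitting a plane binary tree at its root gives
`F (m + 2) = f (m + 2) * ∑ k, F k * F (m + 1 - k)` for its hook sum `F`. When `φ h = h * f h` the
factorials absorb the binomial coefficients, and `A n = n! / 2 ^ n * F n` follows by induction.
-/

open Finset Function

noncomputable section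

namespace Andre

section Reach

variable {α : Type*} {p q : α → α} {u v w : α}

def Reaches (p : α → α) (w v : α) : Prop := ∃ k, p^[k] w = v

theorem Reaches.refl (p : α → α) (v : α) : Reaches p v v := ⟨0, rfl⟩

theorem Reaches.of_apply (h : Reaches p (p w) v) : Reaches p w v := by
  obtain ⟨k, hk⟩ := h
  exact ⟨k + 1, by rwa [iterate_succ_apply]⟩

theorem Reaches.apply_of_ne (h : Reaches p w v) (hwv : w ≠ v) : Reaches p (p w) v := by
  obtain ⟨_ | k, hk⟩ := h
  · exact absurd hk hwv
  · exact ⟨k, by rwa [iterate_succ_apply] at hk⟩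

theorem Reaches.trans (h₁ : Reaches p u v) (h₂ : Reaches p v w) : Reaches p u w := by
  obtain ⟨k, rfl⟩ := h₁
  obtain ⟨l, rfl⟩ := h₂
  exact ⟨l + k, iterate_add_apply p l k u⟩

theorem Reaches.total (h₁ : Reaches p w u) (h₂ : Reaches p w v) :
    Reaches p u v ∨ Reaches p v u := by
  obtain ⟨k, rfl⟩ := h₁
  obtain ⟨l, rfl⟩ := h₂
  rcases le_total k l with hkl | hlk
  · exact .inl ⟨l - k, by rw [← iterate_add_apply, Nat.sub_add_cancel hkl]⟩
  · exact .inr ⟨k - l, by rw [← iterate_add_apply, Nat.sub_add_cancel hlk]⟩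

theorem Reaches.eq_of_isFixedPt (h : Reaches p w v) (hw : IsFixedPt p w) : v = w := by
  obtain ⟨k, rfl⟩ := h
  exact hw.iterate k

theorem Reaches.mem_of_mapsTo {s : Set α} (h : Reaches p w v) (hs : Set.MapsTo p s s)
    (hw : w ∈ s) : v ∈ s := by
  obtain ⟨k, rfl⟩ := h
  exact hs.iterate k hw

theorem Reaches.le [Preorder α] (h : Reaches p w v) (hp : id ≤ p) : w ≤ v := by
  obtain ⟨k, rfl⟩ := h
  exact id_le_iterate_of_id_le hp k w

theorem Reaches.of_eqOn (h : Reaches p w v) (hpq : ∀ x, Reaches p x v → x ≠ v → q x = p x) :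
    Reaches q w v := by
  obtain ⟨k, hk⟩ := h
  induction k generalizing w with
  | zero => exact ⟨0, hk⟩
  | succ k ih =>
    rw [iterate_succ_apply] at hk
    by_cases hwv : w = v
    · exact hwv ▸ Reaches.refl q w
    · exact Reaches.of_apply (hpq w ⟨k + 1, by rwa [iterate_succ_apply]⟩ hwv ▸ ih hk)

/-- Before its first visit to `v`, the orbit of `w` has no repetition. -/
theorem Reaches.exists_lt_card [Fintype α] (h : Reaches p w v) :
    ∃ k < Fintype.card α, p^[k] w = v := by
  classical
  refine ⟨Nat.find h, ?_, Nat.find_spec h⟩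
  have hinj : Injective fun i : Fin (Nat.find h + 1) => p^[i] w := by
    suffices ∀ i j : ℕ, i < j → j ≤ Nat.find h → p^[i] w ≠ p^[j] w by
      intro i j hij
      by_contra hne
      rcases lt_or_gt_of_ne (Fin.val_ne_of_ne hne) with hlt | hlt
      · exact this _ _ hlt (Nat.lt_succ_iff.1 j.2) hij
      · exact this _ _ hlt (Nat.lt_succ_iff.1 i.2) hij.symm
    intro i j hij hj heq
    refine Nat.find_min h (m := Nat.find h - (j - i)) (by omega) ?_
    calc p^[Nat.find h - (j - i)] w = p^[Nat.find h - j] (p^[i] w) := by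
          rw [← iterate_add_apply]; congr 1; omega
      _ = p^[Nat.find h] w := by rw [heq, ← iterate_add_apply]; congr 1; omega
      _ = v := Nat.find_spec h
  simpa using Fintype.card_le_of_injective _ hinj

end Reach

section Trees

variable {α : Type*} [Fintype α] {S : Finset α} {p : α → α} {u v w : α}

def subtree (p : α → α) (v : α) : Finset α := {w | Reaches p w v}

def children (p : α → α) (j : α) : Finset α := {i | p i = j ∧ i ≠ j}

@[simp] theorem mem_subtree : w ∈ subtree p v ↔ Reaches p w v := by simp [subtree]

@[simp] theorem mem_children : u ∈ children p v ↔ p u = v ∧ u ≠ v := by simp [children]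

variable [LinearOrder α]

/-- An André tree on the vertex set `S`, encoded by its parent map extended by the identity outside
`S`; the root is the only fixed point in `S`. -/
structure IsAndreOn (S : Finset α) (p : α → α) : Prop where
  apply_eq_of_notMem : ∀ v ∉ S, p v = v
  mapsTo : Set.MapsTo p S S
  id_le : id ≤ p
  le_of_apply_eq : ∀ v ∈ S, p v = v → ∀ u ∈ S, u ≤ v
  card_children_le : ∀ j, #(children p j) ≤ 2

namespace IsAndreOn

variable (hp : IsAndreOn S p)
include hp

theorem lt_apply (h : p v ≠ v) : v < p v := lt_of_le_of_ne (hp.id_le v) (Ne.symm h)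

theorem mem_of_apply_ne (h : p v ≠ v) : v ∈ S := by
  by_contra hv
  exact h (hp.apply_eq_of_notMem v hv)

theorem card_fixed_le_one : #{v ∈ S | p v = v} ≤ 1 := by
  refine card_le_one.2 fun a ha b hb => ?_
  rw [mem_filter] at ha hb
  exact le_antisymm (hp.le_of_apply_eq b hb.1 hb.2 a ha.1) (hp.le_of_apply_eq a ha.1 ha.2 b hb.1)

theorem children_eq_empty (hj : u ∉ S) : children p u = ∅ := by
  refine eq_empty_of_forall_notMem fun i hi => ?_
  obtain ⟨hi, hiu⟩ := mem_children.1 hi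
  exact hj (hi ▸ hp.mapsTo (hp.mem_of_apply_ne fun h => hiu (h.symm.trans hi)))

theorem apply_eq_of_isGreatest (hm : IsGreatest (S : Set α) u) : p u = u :=
  le_antisymm (hm.2 (hp.mapsTo hm.1)) (hp.id_le u)

theorem reaches_of_isGreatest (hv : v ∈ S) (hm : IsGreatest (S : Set α) u) : Reaches p v u := by
  set a := ({w | Reaches p v w} : Finset α).max' ⟨v, by simp [Reaches.refl]⟩
  have ha : Reaches p v a := (mem_filter.1 (max'_mem _ _)).2
  have hpa : p a = a :=
    le_antisymm (le_max' _ _ (mem_filter.2 ⟨mem_univ _, ha.trans ⟨1, rfl⟩⟩)) (hp.id_le a)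
  have haS : a ∈ S := ha.mem_of_mapsTo hp.mapsTo hv
  rwa [le_antisymm (hm.2 haS) (hp.le_of_apply_eq a haS hpa u hm.1)] at ha

theorem subtree_subset (hv : v ∈ S) : subtree p v ⊆ S := by
  intro w hw
  by_contra hwS
  rw [mem_subtree] at hw
  exact hwS (hw.eq_of_isFixedPt (hp.apply_eq_of_notMem w hwS) ▸ hv)

theorem subtree_eq_of_isGreatest (hm : IsGreatest (S : Set α) u) : subtree p u = S :=
  (hp.subtree_subset hm.1).antisymm fun _ hw => mem_subtree.2 (hp.reaches_of_isGreatest hw hm)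

end IsAndreOn

variable {R : Type*} [CommSemiring R] (φ : ℕ → R)

def hookWeight (S : Finset α) (p : α → α) : R := ∏ v ∈ S, φ #(subtree p v)

def andreTreesOn (S : Finset α) : Finset (α → α) := {p | IsAndreOn S p}

def andreSum (S : Finset α) : R := ∑ p ∈ andreTreesOn S, hookWeight φ S p

@[simp] theorem mem_andreTreesOn : p ∈ andreTreesOn S ↔ IsAndreOn S p := by simp [andreTreesOn]

end Trees

section Relabel

variable {α β : Type*} [LinearOrder α] [LinearOrder β] (f : β ↪o α) {p : α → α} {q : β → β}

def push (q : β → β) (v : α) : α :=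
  if h : ∃ x, f x = v then f (q h.choose) else v

def pull (p : α → α) (x : β) : β :=
  if h : ∃ y, f y = p (f x) then h.choose else x

theorem push_apply (x : β) : push f q (f x) = f (q x) := by
  have h : ∃ y, f y = f x := ⟨x, rfl⟩
  rw [push, dif_pos h, f.injective h.choose_spec]

theorem push_apply_of_notMem {v : α} (hv : ∀ x, f x ≠ v) : push f q v = v :=
  dif_neg fun ⟨x, hx⟩ => hv x hx

theorem pull_apply (x : β) (h : ∃ y, f y = p (f x)) : f (pull f p x) = p (f x) := by
  rw [pull, dif_pos h, h.choose_spec]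

variable {f}

theorem reaches_map_iff (hpq : ∀ x, p (f x) = f (q x)) {x y : β} :
    Reaches p (f x) (f y) ↔ Reaches q x y := by
  have hiter (k : ℕ) : p^[k] (f x) = f (q^[k] x) :=
    (Semiconj.iterate_right (f := f) (fun x => (hpq x).symm) k x).symm
  simp only [Reaches, hiter, f.injective.eq_iff]

theorem exists_eq_of_apply_ne (hfix : ∀ v, (∀ x, f x ≠ v) → p v = v) {v : α} (hv : p v ≠ v) :
    ∃ x, f x = v := by
  by_contra h
  push Not at h
  exact hv (hfix v h)

section Transport

variable [Fintype α] (hpq : ∀ x, p (f x) = f (q x)) (hfix : ∀ v, (∀ x, f x ≠ v) → p v = v)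
include hpq hfix

theorem children_eq_empty_of_forall_ne {v : α} (hv : ∀ x, f x ≠ v) : children p v = ∅ := by
  ext u
  simp only [mem_children, Finset.notMem_empty, iff_false, not_and]
  intro hu hne
  obtain ⟨x, rfl⟩ := exists_eq_of_apply_ne hfix fun h => hne (h.symm.trans hu)
  exact hv _ (hpq x ▸ hu)

variable [Fintype β]

theorem subtree_map (y : β) : subtree p (f y) = (subtree q y).map f.toEmbedding := by
  ext w
  simp only [mem_subtree, mem_map, RelEmbedding.coe_toEmbedding]
  constructor
  · intro hw
    by_cases hrange : ∃ x, f x = w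
    · obtain ⟨x, rfl⟩ := hrange
      exact ⟨x, (reaches_map_iff hpq).1 hw, rfl⟩
    · push Not at hrange
      exact absurd (hw.eq_of_isFixedPt (hfix w hrange)) (hrange y)
  · rintro ⟨x, hx, rfl⟩
    exact (reaches_map_iff hpq).2 hx

theorem children_map (y : β) : children p (f y) = (children q y).map f.toEmbedding := by
  ext u
  simp only [mem_children, mem_map, RelEmbedding.coe_toEmbedding]
  constructor
  · rintro ⟨hu, hne⟩
    obtain ⟨x, rfl⟩ := exists_eq_of_apply_ne hfix fun h => hne (h.symm.trans hu)
    rw [hpq] at hu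
    exact ⟨x, ⟨f.injective hu, fun h => hne (h ▸ rfl)⟩, rfl⟩
  · rintro ⟨x, ⟨hx, hne⟩, rfl⟩
    exact ⟨by rw [hpq, hx], fun h => hne (f.injective h)⟩

theorem isAndreOn_map_iff : IsAndreOn (univ.map f.toEmbedding) p ↔ IsAndreOn univ q := by
  have hmem (v : α) : v ∈ univ.map f.toEmbedding ↔ ∃ x, f x = v := by simp
  constructor
  · intro hp
    refine ⟨fun x hx => absurd (mem_univ x) hx, fun x _ => by simp, fun x => ?_, ?_, fun y => ?_⟩
    · exact f.le_iff_le.1 (hpq x ▸ hp.id_le (f x))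
    · intro x _ hx u _
      refine f.le_iff_le.1 (hp.le_of_apply_eq (f x) ((hmem _).2 ⟨x, rfl⟩) (by rw [hpq, hx]) _ ?_)
      exact (hmem _).2 ⟨u, rfl⟩
    · rw [← card_map f.toEmbedding, ← children_map hpq hfix]
      exact hp.card_children_le (f y)
  · intro hq
    refine ⟨fun v hv => hfix v fun x hx => hv ((hmem v).2 ⟨x, hx⟩), ?_, fun v => ?_, ?_,
      fun j => ?_⟩
    · rintro v hv
      obtain ⟨x, rfl⟩ := (hmem v).1 hv
      exact (hmem _).2 ⟨q x, (hpq x).symm⟩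
    · by_cases h : ∃ x, f x = v
      · obtain ⟨x, rfl⟩ := h
        rw [id, hpq]
        exact f.le_iff_le.2 (hq.id_le x)
      · push Not at h
        exact (hfix v h).ge
    · intro v hv hpv u hu
      obtain ⟨x, rfl⟩ := (hmem v).1 hv
      obtain ⟨y, rfl⟩ := (hmem u).1 hu
      refine f.le_iff_le.2 (hq.le_of_apply_eq x (mem_univ x) (f.injective ?_) y (mem_univ y))
      rw [← hpq, hpv]
    · by_cases h : ∃ y, f y = j
      · obtain ⟨y, rfl⟩ := h
        rw [children_map hpq hfix, card_map]
        exact hq.card_children_le y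
      · push Not at h
        simp [children_eq_empty_of_forall_ne hpq hfix h]

theorem hookWeight_map {R : Type*} [CommSemiring R] (φ : ℕ → R) :
    hookWeight φ (univ.map f.toEmbedding) p = hookWeight φ univ q := by
  simp only [hookWeight, prod_map, RelEmbedding.coe_toEmbedding, subtree_map hpq hfix,
    card_map]

end Transport

variable [Fintype α] [Fintype β] (f)

theorem andreSum_map {R : Type*} [CommSemiring R] (φ : ℕ → R) :
    andreSum φ (univ.map f.toEmbedding) = andreSum φ (univ : Finset β) := by
  have hmaps {p : α → α} (hp : IsAndreOn (univ.map f.toEmbedding) p) (x : β) :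
      ∃ y, f y = p (f x) := by
    simpa using hp.mapsTo (by simp : f x ∈ (univ.map f.toEmbedding : Set α))
  have hpull {p : α → α} (hp : IsAndreOn (univ.map f.toEmbedding) p) (x : β) :
      p (f x) = f (pull f p x) :=
    (pull_apply f x (hmaps hp x)).symm
  have hfix_pull {p : α → α} (hp : IsAndreOn (univ.map f.toEmbedding) p) (v : α)
      (hv : ∀ x, f x ≠ v) : p v = v :=
    hp.apply_eq_of_notMem v (by simpa using hv)
  symm
  refine sum_nbij' (push f) (pull f) (fun q hq => ?_) (fun p hp => ?_) (fun q _ => ?_)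
    (fun p hp => ?_) (fun q _ => ?_)
  · rw [mem_andreTreesOn] at hq ⊢
    exact (isAndreOn_map_iff (push_apply f) fun _ => push_apply_of_notMem f).2 hq
  · rw [mem_andreTreesOn] at hp ⊢
    exact (isAndreOn_map_iff (hpull hp) (hfix_pull hp)).1 hp
  · funext x
    apply f.injective
    rw [pull_apply f x ⟨q x, (push_apply f x).symm⟩, push_apply]
  · rw [mem_andreTreesOn] at hp
    funext v
    by_cases hv : ∃ x, f x = v
    · obtain ⟨x, rfl⟩ := hv
      rw [push_apply, ← hpull hp]
    · push Not at hv
      rw [push_apply_of_notMem f hv, hfix_pull hp v hv]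
  · exact (hookWeight_map (push_apply f) (fun _ => push_apply_of_notMem f) φ).symm

end Relabel

section Split

variable {α : Type*} [LinearOrder α] [OrderTop α]
  {S D : Finset α} {p p₁ p₂ q : α → α} {c u v L : α}

def attachTop (q : α → α) (v : α) : α := if q v = v then ⊤ else q v

def detachTop (p : α → α) (v : α) : α := if p v = ⊤ then v else p v

def graft (S : Finset α) (p₁ p₂ : α → α) (v : α) : α :=
  if v ∈ S then attachTop p₁ v else attachTop p₂ v

def prune (D : Finset α) (p : α → α) (v : α) : α := if v ∈ D then detachTop p v else v

theorem graft_apply_of_mem (hv : v ∈ S) : graft S p₁ p₂ v = attachTop p₁ v := if_pos hv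

theorem graft_apply_of_notMem (hv : v ∉ S) : graft S p₁ p₂ v = attachTop p₂ v := if_neg hv

theorem prune_apply_of_mem (hv : v ∈ D) : prune D p v = detachTop p v := if_pos hv

theorem prune_apply_of_notMem (hv : v ∉ D) : prune D p v = v := if_neg hv

theorem le_attachTop (h : v ≤ q v) : v ≤ attachTop q v := by
  unfold attachTop
  split_ifs
  exacts [le_top, h]

theorem eq_top_of_attachTop_eq (h : attachTop q v = v) : v = ⊤ := by
  unfold attachTop at h
  split_ifs at h with hq
  exacts [h.symm, absurd h hq]

theorem attachTop_eq_of_ne_top (h : attachTop q v ≠ ⊤) : attachTop q v = q v ∧ q v ≠ v := by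
  unfold attachTop at h ⊢
  split_ifs at h ⊢ with hq
  exacts [absurd rfl h, ⟨rfl, hq⟩]

theorem eq_of_attachTop_eq_top (h : attachTop q v = ⊤) (hq : q v ≠ ⊤) : q v = v := by
  unfold attachTop at h
  split_ifs at h with h'
  exacts [h', absurd h hq]

theorem attachTop_congr (h : q v = p v) : attachTop q v = attachTop p v := by
  simp [attachTop, h]

theorem detachTop_congr (h : q v = p v) : detachTop q v = detachTop p v := by
  simp [detachTop, h]

theorem detachTop_attachTop (h : q v ≠ ⊤) : detachTop (attachTop q) v = q v := by
  unfold detachTop attachTop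
  split_ifs with h₁ h₂ <;> simp_all

variable [Fintype α]

def complTop (S : Finset α) : Finset α := (insert ⊤ S)ᶜ

@[simp] theorem mem_complTop : v ∈ complTop S ↔ v ≠ ⊤ ∧ v ∉ S := by simp [complTop]

theorem complTop_complTop (hS : ⊤ ∉ S) : complTop (complTop S) = S := by
  ext v
  simp only [mem_complTop, not_and, not_not]
  exact ⟨fun h => h.2 h.1, fun h => ⟨fun hv => hS (hv ▸ h), fun _ => h⟩⟩

theorem top_notMem_complTop : ⊤ ∉ complTop S := by simp

theorem children_graft_subset {j : α} (hj : j ≠ ⊤) :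
    children (graft S p₁ p₂) j ⊆ children p₁ j ∪ children p₂ j := by
  intro i hi
  obtain ⟨hi, hij⟩ := mem_children.1 hi
  unfold graft at hi
  split_ifs at hi
  · obtain ⟨h, -⟩ := attachTop_eq_of_ne_top (hi ▸ hj)
    exact mem_union_left _ (mem_children.2 ⟨h ▸ hi, hij⟩)
  · obtain ⟨h, -⟩ := attachTop_eq_of_ne_top (hi ▸ hj)
    exact mem_union_right _ (mem_children.2 ⟨h ▸ hi, hij⟩)

def branch (p : α → α) (L : α) : Finset α := {v | ∃ c ≠ ⊤, Reaches p v c ∧ Reaches p L c}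

theorem IsAndreOn.apply_top (hp : IsAndreOn univ p) : p ⊤ = ⊤ :=
  hp.apply_eq_of_isGreatest (by simp)

theorem IsAndreOn.lt_apply_of_ne_top (hp : IsAndreOn univ p) (hv : v ≠ ⊤) : v < p v :=
  hp.lt_apply fun h => hv (top_le_iff.1 (hp.le_of_apply_eq v (mem_univ v) h ⊤ (mem_univ ⊤)))

theorem IsAndreOn.reaches_top (hp : IsAndreOn univ p) (v : α) : Reaches p v ⊤ :=
  hp.reaches_of_isGreatest (mem_univ v) (by simp)

theorem IsAndreOn.exists_child_top (hp : IsAndreOn univ p) (hv : v ≠ ⊤) :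
    ∃ c ≠ ⊤, p c = ⊤ ∧ Reaches p v c := by
  classical
  have h := hp.reaches_top v
  have hk : Nat.find h ≠ 0 := fun h0 => hv (by simpa [h0] using Nat.find_spec h)
  refine ⟨p^[Nat.find h - 1] v, Nat.find_min h (by omega), ?_, _, rfl⟩
  rw [← iterate_succ_apply' p, Nat.succ_eq_add_one, Nat.sub_add_cancel (Nat.pos_of_ne_zero hk)]
  exact Nat.find_spec h

theorem mem_branch_iff (hp : IsAndreOn univ p) (hc : c ≠ ⊤) (hpc : p c = ⊤)
    (hLc : Reaches p L c) : v ∈ branch p L ↔ Reaches p v c := by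
  simp only [branch, mem_filter, mem_univ, true_and]
  refine ⟨fun ⟨c', hc', hvc', hLc'⟩ => ?_, fun hvc => ⟨c, hc, hvc, hLc⟩⟩
  rcases hLc.total hLc' with hcc' | hc'c
  · by_cases h : c = c'
    · exact h ▸ hvc'
    · have := hcc'.apply_of_ne h
      rw [hpc] at this
      exact absurd (this.eq_of_isFixedPt hp.apply_top) hc'
  · exact hvc'.trans hc'c

theorem graft_top (hS : ⊤ ∉ S) (hp₂ : IsAndreOn (complTop S) p₂) : graft S p₁ p₂ ⊤ = ⊤ := by
  simp [graft, hS, attachTop, hp₂.apply_eq_of_notMem ⊤ top_notMem_complTop]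

theorem prune_graft (hS : ⊤ ∉ S) (hp₁ : IsAndreOn S p₁) : prune S (graft S p₁ p₂) = p₁ := by
  funext v
  by_cases hv : v ∈ S
  · rw [prune_apply_of_mem hv, detachTop_congr (graft_apply_of_mem hv),
      detachTop_attachTop fun h => hS (h ▸ hp₁.mapsTo hv)]
  · rw [prune_apply_of_notMem hv, hp₁.apply_eq_of_notMem v hv]

section Graft

variable (hS : ⊤ ∉ S) (hp₁ : IsAndreOn S p₁) (hp₂ : IsAndreOn (complTop S) p₂)
include hS hp₁ hp₂

theorem graft_comm : graft S p₁ p₂ = graft (complTop S) p₂ p₁ := by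
  funext v
  by_cases hvS : v ∈ S
  · have : v ∉ complTop S := by simp [hvS]
    simp [graft, hvS, this]
  · by_cases hv : v = ⊤
    · subst hv
      have h₁ := hp₁.apply_eq_of_notMem ⊤ hS
      have h₂ := hp₂.apply_eq_of_notMem ⊤ top_notMem_complTop
      simp [graft, hS, attachTop, h₁, h₂]
    · have : v ∈ complTop S := by simp [hvS, hv]
      simp [graft, hvS, this]

theorem children_graft_top_subset :
    children (graft S p₁ p₂) ⊤ ⊆ {v ∈ S | p₁ v = v} ∪ {v ∈ complTop S | p₂ v = v} := by
  intro i hi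
  obtain ⟨hi, hit⟩ := mem_children.1 hi
  by_cases hiS : i ∈ S
  · rw [graft_apply_of_mem hiS] at hi
    exact mem_union_left _ (mem_filter.2 ⟨hiS,
      eq_of_attachTop_eq_top hi fun h => hS (h ▸ hp₁.mapsTo hiS)⟩)
  · have hiT : i ∈ complTop S := mem_complTop.2 ⟨hit, hiS⟩
    rw [graft_apply_of_notMem hiS] at hi
    exact mem_union_right _ (mem_filter.2 ⟨hiT,
      eq_of_attachTop_eq_top hi fun h => top_notMem_complTop (h ▸ hp₂.mapsTo hiT)⟩)

theorem card_children_graft_le (j : α) : #(children (graft S p₁ p₂) j) ≤ 2 := by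
  by_cases hj : j = ⊤
  · subst hj
    exact (card_le_card (children_graft_top_subset hS hp₁ hp₂)).trans <| (card_union_le _ _).trans
      (add_le_add hp₁.card_fixed_le_one hp₂.card_fixed_le_one)
  refine (card_le_card (children_graft_subset hj)).trans ?_
  by_cases hjS : j ∈ S
  · rw [hp₂.children_eq_empty (by simp [hjS]), union_empty]
    exact hp₁.card_children_le j
  · rw [hp₁.children_eq_empty hjS, empty_union]
    exact hp₂.card_children_le j

theorem isAndreOn_graft : IsAndreOn univ (graft S p₁ p₂) := by
  refine ⟨fun v hv => absurd (mem_univ v) hv, fun _ _ => by simp, fun v => ?_, fun v _ hv u _ => ?_,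
    card_children_graft_le hS hp₁ hp₂⟩
  · by_cases hvS : v ∈ S
    · exact graft_apply_of_mem hvS ▸ le_attachTop (hp₁.id_le v)
    · exact graft_apply_of_notMem hvS ▸ le_attachTop (hp₂.id_le v)
  · have : v = ⊤ := by
      unfold graft at hv
      split_ifs at hv <;> exact eq_top_of_attachTop_eq hv
    exact this ▸ le_top

theorem subtree_graft (hv : v ∈ S) : subtree (graft S p₁ p₂) v = subtree p₁ v := by
  have hmaps : Set.MapsTo (graft S p₁ p₂) (↑S)ᶜ (↑S)ᶜ := by
    intro x hx
    have hx : x ∉ S := hx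
    show graft S p₁ p₂ x ∉ S
    rw [graft_apply_of_notMem hx, attachTop]
    split_ifs with h
    · exact hS
    · exact fun h' => (mem_complTop.1 (hp₂.mapsTo (hp₂.mem_of_apply_ne h))).2 h'
  ext w
  simp only [mem_subtree]
  constructor
  · intro hw
    refine hw.of_eqOn fun x hx hxv => ?_
    have hxS : x ∈ S := by
      by_contra hxS
      exact hx.mem_of_mapsTo hmaps hxS hv
    have hgx : graft S p₁ p₂ x ≠ ⊤ := by
      intro h
      have := hx.apply_of_ne hxv
      rw [h] at this
      exact hS (this.eq_of_isFixedPt (graft_top hS hp₂) ▸ hv)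
    rw [graft_apply_of_mem hxS] at hgx ⊢
    exact (attachTop_eq_of_ne_top hgx).1.symm
  · intro hw
    refine hw.of_eqOn fun x hx hxv => ?_
    have hxS := hp₁.subtree_subset hv (mem_subtree.2 hx)
    have hfix : p₁ x ≠ x := fun h => hxv (hx.eq_of_isFixedPt h).symm
    rw [graft_apply_of_mem hxS, attachTop, if_neg hfix]

theorem hookWeight_graft {R : Type*} [CommSemiring R] (φ : ℕ → R) :
    hookWeight φ univ (graft S p₁ p₂) =
      φ (Fintype.card α) * (hookWeight φ S p₁ * hookWeight φ (complTop S) p₂) := by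
  have htop : subtree (graft S p₁ p₂) ⊤ = univ :=
    (isAndreOn_graft hS hp₁ hp₂).subtree_eq_of_isGreatest (by simp)
  have hcompl (v : α) (hv : v ∈ complTop S) : subtree (graft S p₁ p₂) v = subtree p₂ v := by
    rw [graft_comm hS hp₁ hp₂]
    exact subtree_graft top_notMem_complTop hp₂ (by rwa [complTop_complTop hS]) hv
  unfold hookWeight
  rw [← prod_mul_prod_compl (insert ⊤ S), prod_insert hS, htop, card_univ, mul_assoc,
    prod_congr rfl fun v hv => by rw [subtree_graft hS hp₁ hp₂ hv]]
  congr 2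
  exact prod_congr rfl fun v hv => by rw [hcompl v hv]

theorem prune_complTop_graft : prune (complTop S) (graft S p₁ p₂) = p₂ := by
  rw [graft_comm hS hp₁ hp₂]
  exact prune_graft top_notMem_complTop hp₂

theorem branch_graft (hL : L ∈ S) : branch (graft S p₁ p₂) L = S := by
  set m := S.max' ⟨L, hL⟩
  have hm : IsGreatest (S : Set α) m := isGreatest_max' S ⟨L, hL⟩
  have hmtop : m ≠ ⊤ := fun h => hS (h ▸ hm.1)
  have hgm : graft S p₁ p₂ m = ⊤ := by
    rw [graft_apply_of_mem hm.1, attachTop, if_pos (hp₁.apply_eq_of_isGreatest hm)]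
  have hsub : subtree (graft S p₁ p₂) m = S := by
    rw [subtree_graft hS hp₁ hp₂ hm.1, hp₁.subtree_eq_of_isGreatest hm]
  have hLm : Reaches (graft S p₁ p₂) L m := by rwa [← mem_subtree, hsub]
  ext v
  rw [mem_branch_iff (isAndreOn_graft hS hp₁ hp₂) hmtop hgm hLm, ← mem_subtree, hsub]

end Graft

section Prune

variable (hp : IsAndreOn univ p)
include hp

theorem attachTop_prune (hv : v ∈ D) : attachTop (prune D p) v = p v := by
  rw [attachTop_congr (prune_apply_of_mem hv)]
  by_cases hpv : p v = ⊤
  · simp [attachTop, detachTop, hpv]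
  · have hlt := hp.lt_apply_of_ne_top fun h => hpv (h ▸ hp.apply_top)
    simp [attachTop, detachTop, hpv, hlt.ne']

theorem graft_prune : graft D (prune D p) (prune (complTop D) p) = p := by
  funext v
  by_cases hvD : v ∈ D
  · rw [graft_apply_of_mem hvD, attachTop_prune hp hvD]
  rw [graft_apply_of_notMem hvD]
  by_cases hv : v = ⊤
  · subst hv
    simp [attachTop, prune, hp.apply_top]
  · exact attachTop_prune hp (mem_complTop.2 ⟨hv, hvD⟩)

theorem isAndreOn_prune (hD : ⊤ ∉ D) (hclosed : ∀ v ∈ D, p v ≠ ⊤ → p v ∈ D)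
    (hroot : ∀ v ∈ D, p v = ⊤ → ∀ u ∈ D, u ≤ v) : IsAndreOn D (prune D p) := by
  refine ⟨fun v hv => prune_apply_of_notMem hv, fun v hv => ?_, fun v => ?_, fun v hv hfix => ?_,
    fun j => ?_⟩
  · rw [Finset.mem_coe, prune_apply_of_mem hv, detachTop]
    split_ifs with h
    exacts [hv, hclosed v hv h]
  · show v ≤ prune D p v
    rw [prune, detachTop]
    split_ifs
    exacts [le_rfl, hp.id_le v, le_rfl]
  · rw [prune_apply_of_mem hv, detachTop] at hfix
    split_ifs at hfix with h
    · exact hroot v hv h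
    · exact absurd hfix (hp.lt_apply_of_ne_top fun hv' => hD (hv' ▸ hv)).ne'
  · refine (card_le_card fun i hi => ?_).trans (hp.card_children_le j)
    obtain ⟨hi, hij⟩ := mem_children.1 hi
    rw [prune] at hi
    split_ifs at hi with hiD
    · rw [detachTop] at hi
      split_ifs at hi
      exacts [absurd hi hij, mem_children.2 ⟨hi, hij⟩]
    · exact absurd hi hij

theorem top_notMem_branch : ⊤ ∉ branch p L := by
  simp only [branch, mem_filter, mem_univ, true_and, not_exists, not_and]
  intro c hc h _
  exact hc (h.eq_of_isFixedPt hp.apply_top)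

variable (hL : L ≠ ⊤)
include hL

theorem self_mem_branch : L ∈ branch p L := by
  obtain ⟨c, hc, -, hLc⟩ := hp.exists_child_top hL
  simp only [branch, mem_filter, mem_univ, true_and]
  exact ⟨c, hc, hLc, hLc⟩

theorem isAndreOn_prune_branch : IsAndreOn (branch p L) (prune (branch p L) p) := by
  obtain ⟨c, hc, hpc, hLc⟩ := hp.exists_child_top hL
  have hmem (v : α) := mem_branch_iff hp hc hpc hLc (v := v)
  have heq (v : α) (hv : Reaches p v c) (hpv : p v = ⊤) : v = c := by
    by_contra hvc
    have := hv.apply_of_ne hvc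
    rw [hpv] at this
    exact hc (this.eq_of_isFixedPt hp.apply_top)
  refine isAndreOn_prune hp (top_notMem_branch hp) (fun v hv hpv => ?_) (fun v hv hpv u hu => ?_)
  · rw [hmem] at hv ⊢
    exact hv.apply_of_ne fun hvc => hpv (hvc ▸ hpc)
  · rw [hmem] at hv hu
    exact heq v hv hpv ▸ hu.le hp.id_le

theorem isAndreOn_prune_complTop_branch :
    IsAndreOn (complTop (branch p L)) (prune (complTop (branch p L)) p) := by
  obtain ⟨c, hc, hpc, hLc⟩ := hp.exists_child_top hL
  have hmem (v : α) := mem_branch_iff hp hc hpc hLc (v := v)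
  refine isAndreOn_prune hp top_notMem_complTop (fun v hv hpv => ?_) (fun v hv hpv u hu => ?_)
  · rw [mem_complTop, hmem] at hv ⊢
    exact ⟨hpv, fun h => hv.2 h.of_apply⟩
  · rw [mem_complTop, hmem] at hv hu
    obtain ⟨c', hc', hpc', huc'⟩ := hp.exists_child_top hu.1
    suffices v = c' from this ▸ huc'.le hp.id_le
    by_contra hvc'
    have hvc : v ≠ c := fun h => hv.2 (h ▸ Reaches.refl p c)
    have hc'c : c' ≠ c := fun h => hu.2 (h ▸ huc')
    have : 2 < #(children p ⊤) := two_lt_card_iff.2 ⟨v, c', c, mem_children.2 ⟨hpv, hv.1⟩,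
      mem_children.2 ⟨hpc', hc'⟩, mem_children.2 ⟨hpc, hc⟩, hvc', hvc, hc'c⟩
    exact absurd (hp.card_children_le ⊤) this.not_ge

end Prune

/-- An André tree with root `⊤` is the graft of its branch containing `L` with the rest. -/
theorem andreSum_univ_eq {R : Type*} [CommSemiring R] (φ : ℕ → R) (hL : L ≠ ⊤) :
    andreSum φ (univ : Finset α) = φ (Fintype.card α) *
      ∑ S ∈ ({S | ⊤ ∉ S ∧ L ∈ S} : Finset (Finset α)),
        andreSum φ S * andreSum φ (complTop S) := by
  unfold andreSum
  rw [← sum_fiberwise_of_maps_to (g := fun p => branch p L) fun p hp => ?_, mul_sum]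
  · refine sum_congr rfl fun S hS => ?_
    obtain ⟨hS, hLS⟩ := (mem_filter.1 hS).2
    rw [sum_mul_sum, ← sum_product', mul_sum]
    symm
    refine sum_nbij' (fun x => graft S x.1 x.2) (fun p => (prune S p, prune (complTop S) p))
      (fun x hx => ?_) (fun p hp => ?_) (fun x hx => ?_) (fun p hp => ?_) (fun x hx => ?_)
    · simp only [mem_product, mem_andreTreesOn] at hx
      exact mem_filter.2 ⟨mem_andreTreesOn.2 (isAndreOn_graft hS hx.1 hx.2),
        branch_graft hS hx.1 hx.2 hLS⟩
    · obtain ⟨hp', rfl⟩ := mem_filter.1 hp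
      rw [mem_andreTreesOn] at hp'
      exact mem_product.2 ⟨mem_andreTreesOn.2 (isAndreOn_prune_branch hp' hL),
        mem_andreTreesOn.2 (isAndreOn_prune_complTop_branch hp' hL)⟩
    · simp only [mem_product, mem_andreTreesOn] at hx
      exact Prod.ext (prune_graft hS hx.1) (prune_complTop_graft hS hx.1 hx.2)
    · exact graft_prune (mem_andreTreesOn.1 (mem_filter.1 hp).1)
    · simp only [mem_product, mem_andreTreesOn] at hx
      exact (hookWeight_graft hS hx.1 hx.2 φ).symm
  · rw [mem_andreTreesOn] at hp
    simp [top_notMem_branch hp, self_mem_branch hp hL]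

end Split

section Recursion

variable {R : Type*} [CommSemiring R] (φ : ℕ → R)

def andreSeq (n : ℕ) : R := andreSum φ (univ : Finset (Fin n))

theorem andreSum_eq_andreSeq {α : Type*} [LinearOrder α] [Fintype α] (S : Finset α) :
    andreSum φ S = andreSeq φ #S := by
  rw [andreSeq, ← andreSum_map (S.orderEmbOfFin rfl), map_orderEmbOfFin_univ]

theorem andreTreesOn_univ_of_subsingleton {α : Type*} [LinearOrder α] [Fintype α]
    [Subsingleton α] : andreTreesOn (univ : Finset α) = univ := by
  refine eq_univ_of_forall fun p => mem_andreTreesOn.2 ⟨fun v hv => absurd (mem_univ v) hv,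
    fun _ _ => by simp, fun v => (Subsingleton.elim v (p v)).le,
    fun v _ _ u _ => (Subsingleton.elim u v).le, fun j => ?_⟩
  simp [children, Subsingleton.elim _ j]

theorem andreSeq_zero : andreSeq φ 0 = 1 := by
  rw [andreSeq, andreSum, andreTreesOn_univ_of_subsingleton]
  simp [hookWeight]

theorem andreSeq_one : andreSeq φ 1 = φ 1 := by
  rw [andreSeq, andreSum, andreTreesOn_univ_of_subsingleton]
  simp [hookWeight, subtree, filter_singleton, Reaches.refl]

variable {α : Type*} [LinearOrder α] [Fintype α] [OrderTop α]

theorem card_complTop {S : Finset α} (hS : ⊤ ∉ S) :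
    #(complTop S) = Fintype.card α - 1 - #S := by
  rw [complTop, card_compl, card_insert_of_notMem hS]
  omega

/-- Complementation in `univ.erase ⊤` swaps the sets containing `L` with those avoiding it. -/
theorem two_mul_sum_filter_mem {g : Finset α → R} (hg : ∀ S, ⊤ ∉ S → g (complTop S) = g S)
    {L : α} (hL : L ≠ ⊤) :
    2 * ∑ S ∈ ({S | ⊤ ∉ S ∧ L ∈ S} : Finset (Finset α)), g S =
      ∑ S ∈ ({S | ⊤ ∉ S} : Finset (Finset α)), g S := by
  rw [two_mul, ← sum_filter_add_sum_filter_not ({S | ⊤ ∉ S} : Finset (Finset α)) (L ∈ ·),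
    filter_filter]
  congr 1
  refine sum_nbij' complTop complTop (fun S hS => ?_) (fun S hS => ?_) (fun S hS => ?_)
    (fun S hS => ?_) (fun S hS => ?_) <;> simp only [mem_filter, mem_univ, true_and] at hS
  · simp [hS, hL]
  · simp [hS, hL]
  · exact complTop_complTop hS.1
  · exact complTop_complTop hS.1
  · exact (hg S hS.1).symm

theorem sum_filter_top_notMem_card (h : ℕ → R) :
    ∑ S ∈ ({S | ⊤ ∉ S} : Finset (Finset α)), h #S =
      ∑ k ∈ range (Fintype.card α), ((Fintype.card α - 1).choose k : R) * h k := by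
  have hset : ({S | ⊤ ∉ S} : Finset (Finset α)) = (univ.erase ⊤).powerset := by
    ext S
    simp [subset_erase]
  rw [hset, sum_powerset_apply_card, card_erase_of_mem (mem_univ _), card_univ,
    Nat.sub_add_cancel (Fintype.card_pos (α := α))]
  simp only [nsmul_eq_mul]

theorem two_mul_andreSeq_add_two (m : ℕ) :
    2 * andreSeq φ (m + 2) = φ (m + 2) * ∑ k ∈ range (m + 2),
      ((m + 1).choose k : R) * (andreSeq φ k * andreSeq φ (m + 1 - k)) := by
  have hL : (0 : Fin (m + 2)) ≠ ⊤ := by simp [Fin.top_eq_last, Fin.ext_iff]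
  have hg (S : Finset (Fin (m + 2))) (hS : ⊤ ∉ S) :
      andreSum φ (complTop S) * andreSum φ (complTop (complTop S)) =
        andreSum φ S * andreSum φ (complTop S) := by
    rw [complTop_complTop hS, mul_comm]
  rw [andreSeq, andreSum_univ_eq φ hL, mul_left_comm, two_mul_sum_filter_mem hg hL,
    Fintype.card_fin]
  congr 1
  calc ∑ S ∈ ({S | ⊤ ∉ S} : Finset (Finset (Fin (m + 2)))),
        andreSum φ S * andreSum φ (complTop S)
      = ∑ S ∈ ({S | ⊤ ∉ S} : Finset (Finset (Fin (m + 2)))),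
          andreSeq φ #S * andreSeq φ (m + 1 - #S) := by
        refine sum_congr rfl fun S hS => ?_
        rw [andreSum_eq_andreSeq, andreSum_eq_andreSeq, card_complTop (mem_filter.1 hS).2,
          Fintype.card_fin]
        rfl
    _ = _ := by
        rw [sum_filter_top_notMem_card (fun k => andreSeq φ k * andreSeq φ (m + 1 - k)),
          Fintype.card_fin]
        rfl

end Recursion

section HookSum

open BinaryTree

def hookSum (f : ℕ → ℚ) (n : ℕ) : ℚ := ∑ T ∈ treesOfNumNodesEq n, hookProd f T

theorem hookSum_zero (f : ℕ → ℚ) : hookSum f 0 = 1 := by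
  simp [hookSum, hookProd]

theorem hookSum_succ (f : ℕ → ℚ) (n : ℕ) :
    hookSum f (n + 1) = f (n + 1) *
      ∑ k ∈ range (n + 1), hookSum f k * hookSum f (n - k) := by
  rw [← Nat.sum_antidiagonal_eq_sum_range_succ (fun i j => hookSum f i * hookSum f j),
    hookSum, treesOfNumNodesEq_succ, sum_biUnion, mul_sum]
  · refine sum_congr rfl fun ij hij => ?_
    rw [HasAntidiagonal.mem_antidiagonal] at hij
    rw [sum_map, hookSum, hookSum, sum_mul_sum, mul_sum, sum_product]
    refine sum_congr rfl fun l hl => ?_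
    rw [mul_sum]
    refine sum_congr rfl fun r hr => ?_
    rw [mem_treesOfNumNodesEq] at hl hr
    show f (l.numNodes + r.numNodes + 1) * hookProd f l * hookProd f r = _
    rw [hl, hr, hij]
    ring
  · simp_rw [Set.PairwiseDisjoint, Set.Pairwise, disjoint_left]
    aesop

end HookSum

theorem choose_mul_factorial_div_pow_mul {n k : ℕ} (hk : k ≤ n) (a b : ℚ) :
    (n.choose k : ℚ) * (k.factorial / 2 ^ k * a * ((n - k).factorial / 2 ^ (n - k) * b)) =
      n.factorial / 2 ^ n * (a * b) := by
  have hfact : (n.choose k * k.factorial * (n - k).factorial : ℚ) = n.factorial := by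
    exact_mod_cast Nat.choose_mul_factorial_mul_factorial hk
  have hpow : (2 : ℚ) ^ k * 2 ^ (n - k) = 2 ^ n := by rw [← pow_add, Nat.add_sub_cancel' hk]
  rw [← hfact, ← hpow]
  field_simp

theorem andreSeq_eq_factorial_div_mul_hookSum {φ f : ℕ → ℚ} (h₁ : 2 * φ 1 = f 1)
    (hφ : ∀ h, 2 ≤ h → φ h = h * f h) (n : ℕ) :
    andreSeq φ n = n.factorial / 2 ^ n * hookSum f n := by
  induction n using Nat.strong_induction_on with
  | _ n ih =>
    match n with
    | 0 => simp [andreSeq_zero, hookSum_zero]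
    | 1 =>
      rw [andreSeq_one, hookSum_succ, sum_range_one, hookSum_zero]
      norm_num
      linarith
    | m + 2 =>
      have hsum : ∑ k ∈ range (m + 2),
          ((m + 1).choose k : ℚ) * (andreSeq φ k * andreSeq φ (m + 1 - k)) =
            (m + 1).factorial / 2 ^ (m + 1) *
              ∑ k ∈ range (m + 2), hookSum f k * hookSum f (m + 1 - k) := by
        rw [mul_sum]
        refine sum_congr rfl fun k hk => ?_
        have hk : k ≤ m + 1 := Nat.lt_succ_iff.1 (mem_range.1 hk)
        rw [ih k (by omega), ih (m + 1 - k) (by omega), choose_mul_factorial_div_pow_mul hk]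
      have hrec := two_mul_andreSeq_add_two φ m
      rw [hsum, hφ _ le_add_self] at hrec
      rw [hookSum_succ, Nat.factorial_succ, pow_succ]
      push_cast at hrec ⊢
      linear_combination hrec / 2

theorem isAndreTree_iff {n : ℕ} {p : Fin n → Fin n} : IsAndreTree n p ↔ IsAndreOn univ p := by
  constructor
  · rintro ⟨hlt, hfix, hcard⟩
    have hle (i : Fin n) : i ≤ p i := by
      by_cases hi : (i : ℕ) + 1 < n
      exacts [(Fin.lt_def.2 (hlt i hi)).le, (hfix i hi).ge]
    refine ⟨fun v hv => absurd (mem_univ v) hv, fun _ _ => by simp, hle, fun v _ hv u _ => ?_,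
      fun j => (card_le_card fun i hi => ?_).trans (hcard j)⟩
    · have : ¬ (v : ℕ) + 1 < n := fun h => (hlt v h).ne' (congrArg Fin.val hv)
      rw [Fin.le_def]
      omega
    · obtain ⟨hi, hij⟩ := mem_children.1 hi
      refine mem_filter.2 ⟨mem_univ i, ?_, hi⟩
      by_contra h
      exact hij (hi ▸ (hfix i h).symm)
  · intro hp
    have hlt (i : Fin n) (hi : (i : ℕ) + 1 < n) : i < p i := by
      refine hp.lt_apply fun h => ?_
      have := Fin.le_def.1 (hp.le_of_apply_eq i (mem_univ i) h ⟨i + 1, hi⟩ (mem_univ _))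
      simp at this
    refine ⟨fun i hi => Fin.lt_def.1 (hlt i hi), fun i hi => ?_, fun j => ?_⟩
    · refine le_antisymm ?_ (hp.id_le i)
      rw [Fin.le_def]
      omega
    · refine (card_le_card fun i hi => ?_).trans (hp.card_children_le j)
      obtain ⟨-, hi', rfl⟩ := mem_filter.1 hi
      exact mem_children.2 ⟨rfl, (hlt i hi').ne⟩

theorem andreTrees_eq (n : ℕ) : andreTrees n = andreTreesOn univ := by
  ext p
  simp [andreTrees, isAndreTree_iff]

theorem hookA_eq_card_subtree (n : ℕ) (p : Fin n → Fin n) (v : Fin n) :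
    hookA n p v = #(subtree p v) := by
  rw [hookA, subtree]
  congr 1
  refine filter_congr fun w _ => ⟨fun ⟨k, _, hk⟩ => ⟨k, hk⟩, fun h => ?_⟩
  simpa using h.exists_lt_card

end Andre

end

open Andre

theorem stmt8_general (n : ℕ) (q : ℚ) :
    ∑ p ∈ andreTrees n, ∏ v ∈ internalsA n p, (2 + q * ((hookA n p v : ℚ) - 1))
      = (n.factorial : ℚ) / 2 ^ n *
          ∑ T ∈ Tree.treesOfNumNodesEq n,
            hookProd (fun h => (2 + q * ((h : ℚ) - 1)) / (h : ℚ)) T := by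
  set φ : ℕ → ℚ := fun h => if 1 < h then 2 + q * ((h : ℚ) - 1) else 1
  have hlhs : ∑ p ∈ andreTrees n, ∏ v ∈ internalsA n p, (2 + q * ((hookA n p v : ℚ) - 1)) =
      andreSeq φ n := by
    rw [andreSeq, andreSum, ← andreTrees_eq]
    refine sum_congr rfl fun p _ => ?_
    rw [internalsA, prod_filter, hookWeight]
    simp only [φ, hookA_eq_card_subtree]
  rw [hlhs]
  refine andreSeq_eq_factorial_div_mul_hookSum (by norm_num [φ]) (fun h hh => ?_) n
  have : (h : ℚ) ≠ 0 := by positivity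
  simp only [φ, if_pos (show 1 < h by omega)]
  field_simp

/-- `Σ_{T ∈ 𝒜_n} ∏_{v internal} (2 + q(h_v - 1))
      = (n!/2^n) · Σ_{T ∈ 𝒯_n} ∏_{v ∈ T} ((2 + q(h_v - 1))/h_v)`,
the first sum over André trees on `n` vertices, the second over plane binary
trees with `n` vertices. -/
theorem stmt8 (n : ℕ) (hn : 1 ≤ n) (q : ℚ) :
    ∑ p ∈ andreTrees n, ∏ v ∈ internalsA n p, (2 + q * ((hookA n p v : ℚ) - 1))
      = (n.factorial : ℚ) / 2 ^ n *
          ∑ T ∈ Tree.treesOfNumNodesEq n,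
            hookProd (fun h => (2 + q * ((h : ℚ) - 1)) / (h : ℚ)) T :=
  stmt8_general n q
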